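/- Fix θ₀ ∈ (0, π/2) and α > 1, and let X = {(ρ·cos θ, ρ·sin θ) : ρ ≥ 0, θ ∈ [θ₀, 2π − θ₀]} ⊆ ℝ² with shortest-path distance d_L(x₁, x₂) = ‖x₁ − x₂‖ if the segment joining x₁ and x₂ is contained in X, and d_L(x₁, x₂) = ‖x₁‖ + ‖x₂‖ otherwise. Let x_p, x_e ∈ X with ‖x_p‖ < α·‖x_e‖. Then every x ∈ X with d_L(x, x_p) = α·d_L(x, x_e) satisfies d_L(x, x_e) = ‖x − x_e‖ (the shortest path from x_e to x is the straight segment), and consequently either ‖x − x_p‖ = α·‖x − x_e‖ (when the segment joining x and x_p lies in X) or ‖x‖ + ‖x_p‖ = α·‖x − x_e‖ (otherwise). Hence the boundary of the evader's dominance region is contained in the union of the Apollonius circle with foci x_p, x_e and the second-type Cartesian oval with foci the origin and x_e. -/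

import Mathlib

/-!
If `x_e` did not see `x`, then `d_L(x, x_e) = ‖x‖ + ‖x_e‖`, and
`α·d_L(x, x_e) ≥ ‖x‖ + α‖x_e‖ > ‖x‖ + ‖x_p‖ ≥ d_L(x, x_p)`, the last step because the path through
the vertex is always admissible. So on the boundary `d_L(x, x_e)` is the straight distance, and
`d_L(x, x_p)` is one of its two possible values.
-/

open MeasureTheory
open scoped ENNReal RealInnerProductSpace

noncomputable section

/-- The Euclidean plane. -/
abbrev Pt := EuclideanSpace ℝ (Fin 2)

/-- The corner-obstacle game region
`X = {(ρ cos θ, ρ sin θ) : ρ ≥ 0, θ ∈ [θ₀, 2π − θ₀]}`, the complement of an open wedge of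
half-angle `θ₀` around the positive x-axis with vertex at the origin. -/
def gameRegion (θ₀ : ℝ) : Set Pt :=
  {x | ∃ ρ θ : ℝ, 0 ≤ ρ ∧ θ ∈ Set.Icc θ₀ (2 * Real.pi - θ₀) ∧
    x = (WithLp.equiv 2 (Fin 2 → ℝ)).symm ![ρ * Real.cos θ, ρ * Real.sin θ]}

open Classical in
/-- The shortest-path distance on the corner-obstacle region: the Euclidean distance if the
segment joining the two points stays in the region, and the length of the two-segment path
through the origin (the obstacle's vertex) otherwise. -/
def dL (θ₀ : ℝ) (x₁ x₂ : Pt) : ℝ :=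
  if segment ℝ x₁ x₂ ⊆ gameRegion θ₀ then ‖x₁ - x₂‖ else ‖x₁‖ + ‖x₂‖

theorem dL_of_segment_subset {θ₀ : ℝ} {x y : Pt} (h : segment ℝ x y ⊆ gameRegion θ₀) :
    dL θ₀ x y = ‖x - y‖ :=
  if_pos h

theorem dL_of_not_segment_subset {θ₀ : ℝ} {x y : Pt} (h : ¬ segment ℝ x y ⊆ gameRegion θ₀) :
    dL θ₀ x y = ‖x‖ + ‖y‖ :=
  if_neg h

theorem dL_le_norm_add_norm (θ₀ : ℝ) (x y : Pt) : dL θ₀ x y ≤ ‖x‖ + ‖y‖ := by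
  unfold dL
  split_ifs
  exacts [norm_sub_le x y, le_rfl]

theorem segment_subset_of_dL_eq_mul {θ₀ α : ℝ} (hα : 1 ≤ α) {x_p x_e x : Pt}
    (hv : ‖x_p‖ < α * ‖x_e‖) (hbd : dL θ₀ x x_p = α * dL θ₀ x x_e) :
    segment ℝ x x_e ⊆ gameRegion θ₀ := by
  by_contra hs
  rw [dL_of_not_segment_subset hs] at hbd
  have hx : ‖x‖ ≤ α * ‖x‖ := le_mul_of_one_le_left (norm_nonneg x) hα
  have := dL_le_norm_add_norm θ₀ x x_p
  linarith

theorem stmt14_general (θ₀ α : ℝ) (hα : 1 < α) (x_p x_e : Pt) (hv : ‖x_p‖ < α * ‖x_e‖)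
    (x : Pt) (hbd : dL θ₀ x x_p = α * dL θ₀ x x_e) :
    dL θ₀ x x_e = ‖x - x_e‖ ∧
    (segment ℝ x x_p ⊆ gameRegion θ₀ → ‖x - x_p‖ = α * ‖x - x_e‖) ∧
    (¬ segment ℝ x x_p ⊆ gameRegion θ₀ → ‖x‖ + ‖x_p‖ = α * ‖x - x_e‖) := by
  have he := dL_of_segment_subset (segment_subset_of_dL_eq_mul hα.le hv hbd)
  rw [he] at hbd
  exact ⟨he, fun h => dL_of_segment_subset h ▸ hbd, fun h => dL_of_not_segment_subset h ▸ hbd⟩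

/-- In the corner-obstacle region with `θ₀ ∈ (0, π/2)`, `α > 1`, and
`x_p, x_e ∈ X` with `‖x_p‖ < α‖x_e‖`, every `x ∈ X` on the boundary of the evader's
dominance region (`d_L(x, x_p) = α·d_L(x, x_e)`) satisfies `d_L(x, x_e) = ‖x − x_e‖`
(the shortest path from `x_e` to `x` is straight), and consequently either
`‖x − x_p‖ = α‖x − x_e‖` (when the segment joining `x` and `x_p` lies in `X`) or
`‖x‖ + ‖x_p‖ = α‖x − x_e‖` (otherwise). -/
theorem stmt14 (θ₀ α : ℝ) (hθ : θ₀ ∈ Set.Ioo 0 (Real.pi / 2)) (hα : 1 < α)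
    (x_p x_e : Pt) (hxp : x_p ∈ gameRegion θ₀) (hxe : x_e ∈ gameRegion θ₀)
    (hv : ‖x_p‖ < α * ‖x_e‖)
    (x : Pt) (hx : x ∈ gameRegion θ₀) (hbd : dL θ₀ x x_p = α * dL θ₀ x x_e) :
    dL θ₀ x x_e = ‖x - x_e‖ ∧
    (segment ℝ x x_p ⊆ gameRegion θ₀ → ‖x - x_p‖ = α * ‖x - x_e‖) ∧
    (¬ segment ℝ x x_p ⊆ gameRegion θ₀ → ‖x‖ + ‖x_p‖ = α * ‖x - x_e‖) :=
  stmt14_general θ₀ α hα x_p x_e hv x hbd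

end
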